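/- arXiv:1605.06290 — 4 statements merged into one kernel-verified Lean document; each statement's English description precedes it below -/
import Mathlib

section
/- For any complex vector h = (h_1, ..., h_M) with M ≥ 1, every complex number d with max{2 max_i |h_i| − ∑_i |h_i|, 0} ≤ |d| ≤ ∑_i |h_i| can be written as d = ∑_{i=1}^M h_i e^{jθ_i} for some phases θ_i ∈ [0, 2π). That is, the attainable set equals the full annulus. -/
open Complex Finset

/-!
Induct on `M`, splitting off `h 0`; let `R` be the sum of the remaining moduli. The circle
`‖d - z‖ = ‖h 0‖` meets the circle `‖z‖ = min (‖d‖ + ‖h 0‖) R` (intermediate value theorem),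
and that radius puts `z` in the annulus of the remaining coefficients, so by induction they
attain `z`; finally `h 0` is rotated onto `d - z`.
-/

lemma exists_norm_eq_and_norm_sub_eq (d : ℂ) {a t : ℝ} (hlo : |‖d‖ - a| ≤ t)
    (hhi : t ≤ ‖d‖ + a) : ∃ z : ℂ, ‖z‖ = t ∧ ‖d - z‖ = a := by
  have ht : 0 ≤ t := (abs_nonneg _).trans hlo
  rw [abs_sub_le_iff] at hlo
  set f : ℝ → ℝ := fun φ => ‖(‖d‖ : ℂ) - t * exp (φ * I)‖ with hf
  have hf0 : f 0 = |‖d‖ - t| := by simp [hf, ← ofReal_sub, norm_real]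
  have hfπ : f Real.pi = ‖d‖ + t := by
    simp only [hf, exp_pi_mul_I, mul_neg_one, sub_neg_eq_add, ← ofReal_add, norm_real,
      Real.norm_of_nonneg (by positivity : 0 ≤ ‖d‖ + t)]
  have hcont : Continuous f := by fun_prop
  obtain ⟨φ, -, hφ⟩ := intermediate_value_Icc Real.pi_pos.le hcont.continuousOn
    (show a ∈ Set.Icc (f 0) (f Real.pi) by
      rw [hf0, hfπ]
      exact ⟨abs_sub_le_iff.2 ⟨by linarith, by linarith⟩, by linarith⟩)
  refine ⟨t * exp ((arg d + φ : ℝ) * I), ?_, ?_⟩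
  · rw [norm_mul, norm_exp_ofReal_mul_I, norm_real, Real.norm_of_nonneg ht, mul_one]
  have hrot : d - t * exp ((arg d + φ : ℝ) * I)
      = exp (arg d * I) * ((‖d‖ : ℂ) - t * exp (φ * I)) := by
    nth_rewrite 1 [← norm_mul_exp_arg_mul_I d]
    push_cast
    rw [add_mul, exp_add]
    ring
  rw [hrot, norm_mul, norm_exp_ofReal_mul_I, one_mul]
  exact hφ

lemma exists_mem_Ico_mul_exp_eq {c w : ℂ} (hcw : ‖c‖ = ‖w‖) :
    ∃ φ ∈ Set.Ico 0 (2 * Real.pi), c * exp (φ * I) = w := by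
  have hper : Function.Periodic (fun φ : ℝ => exp (φ * I)) (2 * Real.pi) := fun φ => by
    simpa using exp_mul_I_periodic (φ : ℂ)
  obtain ⟨φ, hφ, heq⟩ := hper.exists_mem_Ico₀ Real.two_pi_pos (arg w - arg c)
  refine ⟨φ, hφ, ?_⟩
  rw [← heq]
  nth_rewrite 1 [← norm_mul_exp_arg_mul_I c]
  nth_rewrite 2 [← norm_mul_exp_arg_mul_I w]
  push_cast
  rw [hcw, sub_mul, exp_sub]
  field_simp [exp_ne_zero]

lemma exists_sum_mul_exp_eq : ∀ {M : ℕ} (h : Fin M → ℂ) (d : ℂ),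
    (∀ i, 2 * ‖h i‖ ≤ ‖d‖ + ∑ j, ‖h j‖) → ‖d‖ ≤ ∑ j, ‖h j‖ →
    ∃ θ : Fin M → ℝ, (∀ i, θ i ∈ Set.Ico 0 (2 * Real.pi)) ∧
      d = ∑ i, h i * exp (θ i * I)
  | 0, _, d, _, hhi => ⟨Fin.elim0, fun i => i.elim0, by simpa using hhi⟩
  | M + 1, h, d, hlo, hhi => by
    set a := ‖h 0‖
    set R := ∑ j, ‖h (Fin.succ j)‖
    have hsum : ∑ j, ‖h j‖ = a + R := Fin.sum_univ_succ _
    rw [hsum] at hlo hhi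
    have hR : ∀ i, ‖h (Fin.succ i)‖ ≤ R := fun i =>
      single_le_sum (f := fun j => ‖h (Fin.succ j)‖) (fun _ _ => norm_nonneg _) (mem_univ i)
    obtain ⟨z, hz, hdz⟩ := exists_norm_eq_and_norm_sub_eq d (t := min (‖d‖ + a) R)
      (abs_sub_le_iff.2 ⟨le_min (by linarith [norm_nonneg (h 0)]) (by linarith),
        le_min (by linarith [norm_nonneg d]) (by linarith [hlo 0])⟩)
      (min_le_left _ _)
    obtain ⟨φ, hφ, hφeq⟩ := exists_mem_Ico_mul_exp_eq (c := h 0) (w := d - z) hdz.symm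
    obtain ⟨θ, hθ, rfl⟩ := exists_sum_mul_exp_eq (fun j => h (Fin.succ j)) z
      (fun i => by
        rw [hz]
        rcases min_choice (‖d‖ + a) R with hmin | hmin <;> rw [hmin]
        · linarith [hlo i.succ]
        · linarith [hR i])
      (hz ▸ min_le_right _ _)
    refine ⟨Fin.cons φ θ, Fin.cases hφ hθ, ?_⟩
    rw [Fin.sum_univ_succ]
    simp only [Fin.cons_zero, Fin.cons_succ, hφeq]
    ring

/-- Every point of the annulus is attainable by CE signals. -/
theorem stmt_1 (M : ℕ) (hM : 1 ≤ M) (h : Fin M → ℂ) (d : ℂ)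
    (hlo : max (2 * (Finset.univ.sup' (Finset.univ_nonempty_iff.mpr ⟨⟨0, hM⟩⟩)
          (fun i => ‖h i‖)) - ∑ i, ‖h i‖) 0
        ≤ ‖d‖)
    (hhi : ‖d‖ ≤ ∑ i, ‖h i‖) :
    ∃ θ : Fin M → ℝ, (∀ i, θ i ∈ Set.Ico 0 (2 * Real.pi)) ∧
      d = ∑ i, h i * Complex.exp ((θ i : ℂ) * Complex.I) := by
  refine exists_sum_mul_exp_eq h d (fun i => ?_) hhi
  have hmax := (le_max_left _ _).trans hlo
  linarith [le_sup' (fun j => ‖h j‖) (mem_univ i)]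
end

section
/- Given a complex vector h ∈ ℂ^M and a finite nonempty set S ⊂ ℂ of desired constellation points, there exists a scaling factor α > 0 such that α·S is contained in the annulus {d : r ≤ |d| ≤ R} (with R = ∑|h_i| > 0 and r = max{2 max|h_i| − R, 0}) if and only if r/R ≤ (min_{s∈S} |s|)/(max_{s∈S} |s|), assuming all s ∈ S are nonzero. -/
open Complex Finset

section Annulus

variable {E : Type*} [NormedAddCommGroup E] [NormedSpace ℝ E]

/-- Scaling by `α > 0` preserves the ratio of the smallest to the largest norm in `S`, so it is
optimal to put the largest norm on the outer circle, `α = R / K`. -/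
theorem exists_pos_smul_mem_annulus_iff {r R : ℝ} (hR : 0 < R) (S : Finset E)
    (hS : S.Nonempty) (hS0 : ∀ s ∈ S, s ≠ 0) :
    (∃ α : ℝ, 0 < α ∧ ∀ s ∈ S, r ≤ ‖α • s‖ ∧ ‖α • s‖ ≤ R) ↔
      r / R ≤ S.inf' hS (‖·‖) / S.sup' hS (‖·‖) := by
  obtain ⟨s₀, hs₀, hK⟩ := exists_mem_eq_sup' hS (‖·‖)
  obtain ⟨s₁, hs₁, hm⟩ := exists_mem_eq_inf' hS (‖·‖)
  set K := S.sup' hS (‖·‖)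
  set m := S.inf' hS (‖·‖)
  have hKpos : 0 < K := hK ▸ norm_pos_iff.mpr (hS0 _ hs₀)
  have hm0 : 0 ≤ m := hm ▸ norm_nonneg _
  rw [div_le_div_iff₀ hR hKpos]
  constructor
  · rintro ⟨α, hα, hαS⟩
    have hrm : r ≤ α * m := by
      simpa only [norm_smul, Real.norm_of_nonneg hα.le, hm] using (hαS _ hs₁).1
    have hKR : α * K ≤ R := by
      simpa only [norm_smul, Real.norm_of_nonneg hα.le, hK] using (hαS _ hs₀).2
    calc r * K ≤ α * m * K := by gcongr
      _ = α * K * m := by ring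
      _ ≤ R * m := by gcongr
      _ = m * R := mul_comm _ _
  · intro hrK
    have hα : 0 < R / K := div_pos hR hKpos
    refine ⟨R / K, hα, fun s hs => ?_⟩
    have hms : m ≤ ‖s‖ := inf'_le (‖·‖) hs
    have hsK : ‖s‖ ≤ K := le_sup' (‖·‖) hs
    rw [norm_smul, Real.norm_of_nonneg hα.le, div_mul_eq_mul_div, le_div_iff₀ hKpos,
      div_le_iff₀ hKpos]
    constructor <;> nlinarith

end Annulus

/-- Feasibility of a constellation S in the annulus iff the radius-ratio condition holds. -/
theorem stmt_3 (M : ℕ) (hM : 1 ≤ M) (h : Fin M → ℂ) (hh : h ≠ 0)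
    (S : Finset ℂ) (hS : S.Nonempty) (hS0 : ∀ s ∈ S, s ≠ 0) :
    (∃ α : ℝ, 0 < α ∧ ∀ s ∈ S,
        max (2 * (Finset.univ.sup' (Finset.univ_nonempty_iff.mpr ⟨⟨0, hM⟩⟩)
              (fun i => ‖h i‖)) - ∑ i, ‖h i‖) 0
          ≤ ‖(α : ℂ) * s‖ ∧
        ‖(α : ℂ) * s‖ ≤ ∑ i, ‖h i‖) ↔
    (max (2 * (Finset.univ.sup' (Finset.univ_nonempty_iff.mpr ⟨⟨0, hM⟩⟩)
          (fun i => ‖h i‖)) - ∑ i, ‖h i‖) 0)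
        / (∑ i, ‖h i‖)
      ≤ (S.inf' hS (‖·‖)) / (S.sup' hS (‖·‖)) := by
  have hR : 0 < ∑ i, ‖h i‖ := by
    obtain ⟨i, hi⟩ := Function.ne_iff.mp hh
    exact sum_pos' (fun j _ => norm_nonneg _) ⟨i, mem_univ i, norm_pos_iff.mpr hi⟩
  simp_rw [← real_smul]
  exact exists_pos_smul_mem_annulus_iff hR S hS hS0
end

section
/- Let H be an M_r × M_t complex matrix with rank(H) ≥ 2, and let h_1, ..., h_{M_t} denote its columns. Then for any index l ∈ {1, ..., M_t}, there exists a vector u ∈ ℂ^{M_r} such that u^H (2 h_l − ∑_{i=1}^{M_t} h_i) = 0 and ∑_{i=1}^{M_t} |u^H h_i| > 0. -/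
open Complex Finset ComplexConjugate
open Matrix

/-!
The form `u ↦ uᴴ (2 h_l - ∑ i, h_i)` has rank at most one while `u ↦ uᴴ H` has rank
`rank H ≥ 2`, so by rank–nullity the kernel of the first map is not contained in the kernel of the
second.
-/

theorem LinearMap.exists_apply_eq_zero_apply_ne_zero_of_finrank_range_lt
    {K V W₁ W₂ : Type*} [DivisionRing K] [AddCommGroup V] [Module K V] [FiniteDimensional K V]
    [AddCommGroup W₁] [Module K W₁] [AddCommGroup W₂] [Module K W₂]
    (f : V →ₗ[K] W₁) (g : V →ₗ[K] W₂)
    (h : Module.finrank K (range f) < Module.finrank K (range g)) :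
    ∃ v, f v = 0 ∧ g v ≠ 0 := by
  by_contra! hker
  have hle : ker f ≤ ker g := fun v hv => hker v hv
  have := Submodule.finrank_mono hle
  have hf := f.finrank_range_add_finrank_ker
  have hg := g.finrank_range_add_finrank_ker
  omega

theorem Matrix.exists_dotProduct_eq_zero_vecMul_ne_zero {K m n : Type*} [Field K]
    [Fintype m] [DecidableEq m] [Fintype n] (A : Matrix m n K) (hA : 2 ≤ A.rank) (v : m → K) :
    ∃ w, w ⬝ᵥ v = 0 ∧ w ᵥ* A ≠ 0 := by
  have hform : Module.finrank K (LinearMap.range (dotProductEquiv K m v)) ≤ 1 :=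
    (Submodule.finrank_le _).trans_eq (Module.finrank_self K)
  have hA' : Module.finrank K (LinearMap.range A.vecMulLinear) = A.rank := by
    rw [← Matrix.mulVecLin_transpose, ← A.rank_transpose, Matrix.rank]
  obtain ⟨w, hw, hwA⟩ :=
    LinearMap.exists_apply_eq_zero_apply_ne_zero_of_finrank_range_lt _ A.vecMulLinear
      (hform.trans_lt (by omega))
  exact ⟨w, by simpa [dotProduct_comm] using hw, hwA⟩

/-- If rank(H) ≥ 2, for any column index l there is u orthogonal to 2h_l − ∑ h_i with uᴴH ≠ 0. -/
theorem stmt_4 (Mr Mt : ℕ) (H : Matrix (Fin Mr) (Fin Mt) ℂ) (hrank : 2 ≤ H.rank)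
    (l : Fin Mt) :
    ∃ u : Fin Mr → ℂ,
      (∑ j, conj (u j) * (2 * H j l - ∑ i, H j i)) = 0 ∧
      0 < ∑ i, ‖∑ j, conj (u j) * H j i‖ := by
  obtain ⟨w, hw, hwH⟩ := H.exists_dotProduct_eq_zero_vecMul_ne_zero hrank
    (fun j => 2 * H j l - ∑ i, H j i)
  obtain ⟨i, hi⟩ := Function.ne_iff.mp hwH
  refine ⟨star w, by simpa [dotProduct] using hw, ?_⟩
  refine Finset.sum_pos' (fun _ _ => norm_nonneg _) ⟨i, Finset.mem_univ i, norm_pos_iff.mpr ?_⟩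
  simpa [Matrix.vecMul, dotProduct] using hi
end

section
/- Let H ∈ ℂ^{M_r × M_t} with rank(H) ≥ 2, and let τ ∈ [0,1]. Then there exists a unit vector u ∈ ℂ^{M_r} (‖u‖_2 = 1) such that max_i |u^H h_i| ≤ ((τ+1)/2) ∑_i |u^H h_i| and ∑_i |u^H h_i| > 0, where h_i are the columns of H. -/
/-!
The vectors `uᴴH` fill the row space of `H`, of dimension `rank H ≥ 2`. Take a nonzero `v` in it.
If some coordinate dominates, `‖v i‖ > ‖v‖₁ / 2`, pick a nonzero `w` in the row space with
`w i = 0`. Along the segment from `v` to `w` the share of coordinate `i` in the `ℓ¹` norm drops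
from above one half to zero, so by the intermediate value theorem some nonzero point `z` has
`‖z i‖ = ‖z‖₁ / 2`; then no coordinate of `z` exceeds half of `‖z‖₁`. Normalizing the
corresponding `u` gives the unit vector, and `τ ≥ 0` only loosens the bound.
-/

open Complex Finset ComplexConjugate

section CoordinateNorms

variable {ι 𝕜 E : Type*} [Fintype ι]

theorem norm_add_norm_le_sum_norm [SeminormedAddCommGroup E] (z : ι → E) {i j : ι}
    (hij : i ≠ j) : ‖z i‖ + ‖z j‖ ≤ ∑ k, ‖z k‖ := by
  classical
  rw [← Finset.sum_pair (f := fun k => ‖z k‖) hij]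
  exact Finset.sum_le_univ_sum_of_nonneg fun _ => norm_nonneg _

theorem norm_le_half_sum_norm_of_norm_eq_half_sum_norm [SeminormedAddCommGroup E] (z : ι → E)
    {i : ι} (hi : ‖z i‖ = (∑ k, ‖z k‖) / 2) (j : ι) : ‖z j‖ ≤ (∑ k, ‖z k‖) / 2 := by
  rcases eq_or_ne j i with rfl | hji
  · exact hi.le
  · linarith [norm_add_norm_le_sum_norm z hji]

theorem sum_norm_pos [NormedAddCommGroup E] {z : ι → E} (hz : z ≠ 0) : 0 < ∑ k, ‖z k‖ := by
  obtain ⟨i, hi⟩ := Function.ne_iff.mp hz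
  exact (norm_pos_iff.mpr hi).trans_le
    (Finset.single_le_sum (fun k _ => norm_nonneg (z k)) (Finset.mem_univ i))

theorem sum_norm_smul [NormedField 𝕜] [SeminormedAddCommGroup E] [NormedSpace 𝕜 E] (c : 𝕜)
    (z : ι → E) : ∑ k, ‖(c • z) k‖ = ‖c‖ * ∑ k, ‖z k‖ := by
  simp [norm_smul, Finset.mul_sum]

theorem norm_le_half_sum_norm_smul [NormedField 𝕜] [SeminormedAddCommGroup E] [NormedSpace 𝕜 E]
    (c : 𝕜) {z : ι → E} (hz : ∀ i, ‖z i‖ ≤ (∑ k, ‖z k‖) / 2) (i : ι) :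
    ‖(c • z) i‖ ≤ (∑ k, ‖(c • z) k‖) / 2 := by
  rw [sum_norm_smul, Pi.smul_apply, norm_smul, mul_div_assoc]
  exact mul_le_mul_of_nonneg_left (hz i) (norm_nonneg c)

theorem exists_mem_Ico_norm_eq_half_sum_norm [NormedAddCommGroup E] [NormedSpace ℝ E]
    (v w : ι → E) (i : ι) (hv : (∑ k, ‖v k‖) / 2 ≤ ‖v i‖) (hw : ‖w i‖ < (∑ k, ‖w k‖) / 2) :
    ∃ t ∈ Set.Ico (0 : ℝ) 1,
      ‖((1 - t) • v + t • w) i‖ = (∑ k, ‖((1 - t) • v + t • w) k‖) / 2 := by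
  let f : ℝ → ℝ := fun t =>
    ‖((1 - t) • v + t • w) i‖ - (∑ k, ‖((1 - t) • v + t • w) k‖) / 2
  have hf : Continuous f := by fun_prop
  have hzero : (0 : ℝ) ∈ Set.Ioc (f 1) (f 0) := by
    simp only [f, Set.mem_Ioc]
    constructor <;> simp <;> linarith
  obtain ⟨t, ht, hft⟩ := intermediate_value_Ico' zero_le_one hf.continuousOn hzero
  exact ⟨t, ht, sub_eq_zero.mp hft⟩

end CoordinateNorms

theorem Submodule.exists_mem_ne_zero_apply_eq_zero {ι K : Type*} [Fintype ι] [Field K]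
    (V : Submodule K (ι → K)) (hV : 1 < Module.finrank K V) (i : ι) :
    ∃ w ∈ V, w ≠ 0 ∧ w i = 0 := by
  have hker : LinearMap.ker ((LinearMap.proj i).comp V.subtype) ≠ ⊥ :=
    LinearMap.ker_ne_bot_of_finrank_lt (by rwa [Module.finrank_self])
  obtain ⟨w, hw, hw0⟩ := Submodule.exists_mem_ne_zero_of_ne_bot hker
  exact ⟨w, w.2, by simpa using hw0, hw⟩

theorem Submodule.exists_ne_zero_forall_norm_le_half_sum_norm {ι 𝕜 : Type*} [Fintype ι]
    [RCLike 𝕜] (V : Submodule 𝕜 (ι → 𝕜)) (hV : 2 ≤ Module.finrank 𝕜 V) :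
    ∃ z ∈ V, z ≠ 0 ∧ ∀ i, ‖z i‖ ≤ (∑ k, ‖z k‖) / 2 := by
  obtain ⟨v, hvV, hv0⟩ := Submodule.exists_mem_ne_zero_of_ne_bot
    (Submodule.one_le_finrank_iff.mp (by omega) : V ≠ ⊥)
  by_cases hv : ∀ i, ‖v i‖ ≤ (∑ k, ‖v k‖) / 2
  · exact ⟨v, hvV, hv0, hv⟩
  obtain ⟨i, hvi⟩ : ∃ i, (∑ k, ‖v k‖) / 2 < ‖v i‖ := by simpa using hv
  obtain ⟨w, hwV, hw0, hwi⟩ := V.exists_mem_ne_zero_apply_eq_zero hV i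
  obtain ⟨t, ⟨-, ht1⟩, hzi⟩ := exists_mem_Ico_norm_eq_half_sum_norm v w i hvi.le
    (by simpa [hwi] using sum_norm_pos hw0)
  refine ⟨(1 - t) • v + t • w,
    V.add_mem (V.smul_of_tower_mem _ hvV) (V.smul_of_tower_mem _ hwV), ?_,
    norm_le_half_sum_norm_of_norm_eq_half_sum_norm _ hzi⟩
  have hvi0 : v i ≠ 0 := norm_pos_iff.mp ((half_pos (sum_norm_pos hv0)).trans hvi)
  refine Function.ne_iff.mpr ⟨i, ?_⟩
  simpa [hwi, sub_eq_zero, ht1.ne'] using hvi0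

/-- Feasibility of Problem (P2): if rank(H) ≥ 2 and τ ∈ [0,1] there is a unit vector u
    with ‖uᴴH‖_∞ ≤ ((τ+1)/2)‖uᴴH‖_1 and ‖uᴴH‖_1 > 0. -/
theorem stmt_6 (Mr Mt : ℕ) (H : Matrix (Fin Mr) (Fin Mt) ℂ) (hrank : 2 ≤ H.rank)
    (τ : ℝ) (hτ : τ ∈ Set.Icc (0 : ℝ) 1) :
    ∃ u : Fin Mr → ℂ,
      Real.sqrt (∑ j, ‖u j‖ ^ 2) = 1 ∧
      (∀ i₀ : Fin Mt, ‖∑ j, conj (u j) * H j i₀‖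
          ≤ ((τ + 1) / 2) * ∑ i, ‖∑ j, conj (u j) * H j i‖) ∧
      0 < ∑ i, ‖∑ j, conj (u j) * H j i‖ := by
  have hV : 2 ≤ Module.finrank ℂ (LinearMap.range H.vecMulLinear) := by
    rwa [← Matrix.mulVecLin_transpose, ← Matrix.rank, Matrix.rank_transpose]
  obtain ⟨z, ⟨y, rfl⟩, hz0, hz⟩ := Submodule.exists_ne_zero_forall_norm_le_half_sum_norm _ hV
  set x : EuclideanSpace ℂ (Fin Mr) := WithLp.toLp 2 (star y)
  have hx0 : x ≠ 0 := fun hx => hz0 (by simp_all [x])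
  set u := ‖x‖⁻¹ • x
  have hu : ∀ i, ∑ j, conj (u j) * H j i = (‖x‖⁻¹ • H.vecMulLinear y) i := by
    intro i
    simp [u, x, Matrix.vecMul, dotProduct, Finset.mul_sum, mul_assoc]
  refine ⟨u, ?_, ?_, ?_⟩
  · rw [← EuclideanSpace.norm_eq, norm_smul, norm_inv, norm_norm,
      inv_mul_cancel₀ (norm_ne_zero_iff.mpr hx0)]
  · intro i₀
    simp only [hu]
    have hS : 0 ≤ ∑ k, ‖(‖x‖⁻¹ • H.vecMulLinear y) k‖ := by positivity
    linarith [norm_le_half_sum_norm_smul ‖x‖⁻¹ hz i₀, mul_nonneg hτ.1 hS]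
  · simpa only [hu] using
      sum_norm_pos (smul_ne_zero (inv_ne_zero (norm_ne_zero_iff.mpr hx0)) hz0)
end
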